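/- arXiv:2402.05357 — 5 statements merged into one kernel-verified Lean document; each statement's English description precedes it below -/
import Mathlib

section
/- For all real numbers x ≥ y ≥ 1, the quantity (x+y)·log(x+y) − x·log x − y·log y is at least y, where log is the base-2 logarithm. -/
/-- For all real `x ≥ y ≥ 1`, `(x+y)·log₂(x+y) − x·log₂ x − y·log₂ y ≥ y`. -/
theorem stmt_1 (x y : ℝ) (hxy : x ≥ y) (hy : y ≥ 1) :
    (x + y) * Real.logb 2 (x + y) - x * Real.logb 2 x - y * Real.logb 2 y ≥ y := by
  have hy0 : (0:ℝ) < y := lt_of_lt_of_le one_pos hy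
  have hx0 : (0:ℝ) < x := lt_of_lt_of_le hy0 hxy
  have hxy0 : (0:ℝ) < x + y := by linarith
  have h1 : Real.logb 2 x ≤ Real.logb 2 (x + y) :=
    Real.logb_le_logb_of_le one_lt_two (by linarith) (by linarith)
  have h2 : Real.logb 2 (2 * y) ≤ Real.logb 2 (x + y) :=
    Real.logb_le_logb_of_le one_lt_two (by linarith) (by linarith)
  have h3 : Real.logb 2 (2 * y) = 1 + Real.logb 2 y := by
    rw [Real.logb_mul (by norm_num) (ne_of_gt hy0), Real.logb_self_eq_one] <;> norm_num
  nlinarith [mul_le_mul_of_nonneg_left h1 hx0.le, mul_le_mul_of_nonneg_left h2 hy0.le]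
end

section
/- Let Φ(P) = Σ_{S ∈ P} |S| · log₂|S| be the potential of a partition P of an n-element set. If a partition P' is obtained from P by splitting one block S into nonempty blocks S₁ and S₂ with |S₁| ≥ |S₂|, then Φ(P) − Φ(P') ≥ |S₂|. -/
lemma split_ineq (a b : ℕ) (ha : 1 ≤ a) (hb : 1 ≤ b) (hba : b ≤ a) :
    ((a + b : ℕ) : ℝ) * Real.logb 2 (a + b : ℕ) -
      (a : ℝ) * Real.logb 2 a - (b : ℝ) * Real.logb 2 b ≥ b := by
  have hapos : (0:ℝ) < a := by exact_mod_cast ha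
  have hbpos : (0:ℝ) < b := by exact_mod_cast hb
  have hba' : (b:ℝ) ≤ a := by exact_mod_cast hba
  have hn : ((a + b : ℕ) : ℝ) = (a:ℝ) + b := by push_cast; ring
  rw [hn]
  have h1 : Real.logb 2 a ≤ Real.logb 2 ((a:ℝ) + b) :=
    Real.logb_le_logb_of_le (by norm_num) (by positivity) (by linarith)
  have h2 : Real.logb 2 (2 * b) ≤ Real.logb 2 ((a:ℝ) + b) :=
    Real.logb_le_logb_of_le (by norm_num) (by positivity) (by linarith)
  have h3 : Real.logb 2 (2 * b) = 1 + Real.logb 2 b := by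
    rw [Real.logb_mul (by norm_num) (ne_of_gt hbpos), Real.logb_self_eq_one (by norm_num)]
  nlinarith [mul_le_mul_of_nonneg_left h1 hapos.le,
    mul_le_mul_of_nonneg_left h2 hbpos.le]

/-- Potential `Φ(P) = Σ_{S ∈ P} |S|·log₂|S|` over a partition `P`.  Splitting one
block `S` into nonempty blocks `S₁, S₂` with `|S₁| ≥ |S₂|` decreases the potential
by at least `|S₂|`. -/
theorem stmt_3 {α : Type*} [DecidableEq α] (P : Finset (Finset α))
    (hdisj : ∀ A ∈ P, ∀ B ∈ P, A ≠ B → Disjoint A B)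
    (hne : ∀ A ∈ P, A.Nonempty)
    (S S₁ S₂ : Finset α) (hS : S ∈ P)
    (h1 : S₁.Nonempty) (h2 : S₂.Nonempty) (h12 : Disjoint S₁ S₂)
    (hunion : S₁ ∪ S₂ = S) (hsize : S₂.card ≤ S₁.card) :
    (∑ T ∈ P, (T.card : ℝ) * Real.logb 2 T.card) -
      (∑ T ∈ insert S₁ (insert S₂ (P.erase S)), (T.card : ℝ) * Real.logb 2 T.card)
      ≥ S₂.card := by
  have hsub1 : S₁ ⊆ S := hunion ▸ Finset.subset_union_left
  have hsub2 : S₂ ⊆ S := hunion ▸ Finset.subset_union_right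
  have hS1ne : S₁ ≠ S := fun h => by
    have := Finset.disjoint_left.mp h12 (h ▸ hsub2 h2.choose_spec) h2.choose_spec
    exact this
  have hS2ne : S₂ ≠ S := fun h => by
    exact Finset.disjoint_left.mp h12 h1.choose_spec (h ▸ hsub1 h1.choose_spec)
  have hnotP : ∀ T : Finset α, T.Nonempty → T ⊆ S → T ≠ S → T ∉ P.erase S := by
    intro T hTne hTsub hTS hmem
    have hTP := Finset.mem_of_mem_erase hmem
    have := hdisj T hTP S hS hTS
    exact Finset.disjoint_left.mp this hTne.choose_spec (hTsub hTne.choose_spec)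
  have h1not : S₁ ∉ insert S₂ (P.erase S) := by
    simp only [Finset.mem_insert]
    rintro (h | h)
    · exact Finset.disjoint_left.mp h12 (h ▸ h2.choose_spec) h2.choose_spec
    · exact hnotP S₁ h1 hsub1 hS1ne h
  have h2not : S₂ ∉ P.erase S := hnotP S₂ h2 hsub2 hS2ne
  rw [Finset.sum_insert h1not, Finset.sum_insert h2not,
    ← Finset.sum_erase_add P _ hS]
  have hcard : S.card = S₁.card + S₂.card := by
    rw [← hunion, Finset.card_union_of_disjoint h12]
  have := split_ineq S₁.card S₂.card h1.card_pos h2.card_pos hsize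
  rw [← hcard] at this
  linarith
end

section
/- Let q ≥ 1 intervals on the real line be given, and let C be a finite set of pairwise-disjoint intervals (curves on a line). Two members of C are equivalent if they intersect exactly the same subset of the q given intervals. Then the number of equivalence classes is at most O(q) — more precisely, at most 2q + 1. -/
/-- One-dimensional analogue of the combinatorial lemma: `q ≥ 1` query intervals
and a finite family of pairwise-disjoint nonempty intervals `C`; two members of
`C` are equivalent iff they intersect the same query intervals.  The number of
equivalence classes is at most `2q + 1`. -/
theorem stmt_7 (q m : ℕ) (hq : 1 ≤ q) (a b : Fin q → ℝ)
    (c d : Fin m → ℝ) (hcd : ∀ i, c i ≤ d i)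
    (hdisj : ∀ i i' : Fin m, i ≠ i' →
      Disjoint (Set.Icc (c i) (d i)) (Set.Icc (c i') (d i'))) :
    (Set.range fun i : Fin m =>
        {j : Fin q | (Set.Icc (a j) (b j) ∩ Set.Icc (c i) (d i)).Nonempty}).ncard
      ≤ 2 * q + 1 := by
  classical
  set S : Fin m → Set (Fin q) := fun i =>
    {j : Fin q | (Set.Icc (a j) (b j) ∩ Set.Icc (c i) (d i)).Nonempty} with hS
  set A : Fin m → Finset (Fin q) :=
    fun i => Finset.univ.filter (fun j => a j ≤ d i) with hA
  set B : Fin m → Finset (Fin q) :=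
    fun i => Finset.univ.filter (fun j => b j < c i) with hB
  set g : Fin m → ℕ := fun i => (A i).card + (B i).card with hg
  have hmem : ∀ i j, j ∈ S i ↔ (a j ≤ b j ∧ a j ≤ d i ∧ ¬ (b j < c i)) := by
    intro i j
    simp only [hS, Set.mem_setOf_eq, Set.Icc_inter_Icc, Set.nonempty_Icc,
      le_min_iff, max_le_iff, not_lt]
    have := hcd i
    tauto
  have main : ∀ i i', d i < c i' → g i = g i' → S i = S i' := by
    intro i i' hlt hgeq
    have hAsub : A i ⊆ A i' := by
      intro j hj
      simp only [hA, Finset.mem_filter, Finset.mem_univ, true_and] at hj ⊢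
      linarith [hcd i']
    have hBsub : B i ⊆ B i' := by
      intro j hj
      simp only [hB, Finset.mem_filter, Finset.mem_univ, true_and] at hj ⊢
      linarith [hcd i]
    have h1 := Finset.card_le_card hAsub
    have h2 := Finset.card_le_card hBsub
    simp only [hg] at hgeq
    have hAeq : A i = A i' := Finset.eq_of_subset_of_card_le hAsub (by omega)
    have hBeq : B i = B i' := Finset.eq_of_subset_of_card_le hBsub (by omega)
    ext j
    rw [hmem, hmem]
    have e1 : a j ≤ d i ↔ a j ≤ d i' := by
      constructor <;> intro h
      · have hj : j ∈ A i := by simp [hA, h]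
        rw [hAeq] at hj; simpa [hA] using hj
      · have hj : j ∈ A i' := by simp [hA, h]
        rw [← hAeq] at hj; simpa [hA] using hj
    have e2 : b j < c i ↔ b j < c i' := by
      constructor <;> intro h
      · have hj : j ∈ B i := by simp [hB, h]
        rw [hBeq] at hj; simpa [hB] using hj
      · have hj : j ∈ B i' := by simp [hB, h]
        rw [← hBeq] at hj; simpa [hB] using hj
    rw [e1, e2]
  have key : ∀ i i', g i = g i' → S i = S i' := by
    intro i i' hgi
    rcases eq_or_ne i i' with rfl | hne
    · rfl
    · have hdd : d i < c i' ∨ d i' < c i := by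
        by_contra h
        push_neg at h
        obtain ⟨h1, h2⟩ := h
        have hx : max (c i) (c i') ∈ Set.Icc (c i) (d i) ∩ Set.Icc (c i') (d i') := by
          constructor
          · exact ⟨le_max_left _ _, max_le (hcd i) h1⟩
          · exact ⟨le_max_right _ _, max_le h2 (hcd i')⟩
        exact (hdisj i i' hne).le_bot hx
      rcases hdd with hlt | hlt
      · exact main i i' hlt hgi
      · exact (main i' i hlt hgi.symm).symm
  -- range S is the image of range g under a choice function
  have himg : Set.range S =
      (fun n : ℕ => if hn : ∃ i, g i = n then S hn.choose else ∅) '' (Set.range g) := by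
    ext s
    simp only [Set.mem_range, Set.mem_image]
    constructor
    · rintro ⟨i, rfl⟩
      refine ⟨g i, ⟨i, rfl⟩, ?_⟩
      rw [dif_pos ⟨i, rfl⟩]
      exact key _ _ (⟨i, rfl⟩ : ∃ i', g i' = g i).choose_spec
    · rintro ⟨n, ⟨i, rfl⟩, rfl⟩
      rw [dif_pos ⟨i, rfl⟩]
      exact ⟨_, rfl⟩
  have hfin : (Set.range g).Finite := Set.finite_range g
  have h1 : (Set.range S).ncard ≤ (Set.range g).ncard := by
    rw [himg]
    exact Set.ncard_image_le hfin
  have hsub : Set.range g ⊆ ↑(Finset.range (2 * q + 1)) := by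
    rintro n ⟨i, rfl⟩
    simp only [Finset.coe_range, Set.mem_Iio]
    have ha : (A i).card ≤ q := by
      simpa using Finset.card_filter_le Finset.univ (fun j => a j ≤ d i)
    have hb : (B i).card ≤ q := by
      simpa using Finset.card_filter_le Finset.univ (fun j => b j < c i)
    simp only [hg]
    omega
  have h2 : (Set.range g).ncard ≤ 2 * q + 1 := by
    calc (Set.range g).ncard ≤ (↑(Finset.range (2 * q + 1)) : Set ℕ).ncard :=
          Set.ncard_le_ncard hsub (Finset.finite_toSet _)
      _ = 2 * q + 1 := by rw [Set.ncard_coe_finset, Finset.card_range]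
  omega
end

section
/- Let B₀ be a smallest axis-parallel square containing at least n/5 points of a given n-point set P in the plane, with side length r. Then for every t ∈ (0,1), the concentric square B_t with side length (1+t)·r contains at most 4n/5 points of P and at least n/5 points of P. -/
/-- If `B₀` (sup-norm ball of side `r`, i.e. radius `r/2`, centered at `ctr`) is a
smallest axis-parallel square containing at least `n/5` points of an `n`-point
set `P`, then for every `t ∈ (0,1)` the concentric square of side `(1+t)·r`
contains at least `n/5` and at most `4n/5` points of `P`. -/
theorem stmt_11 (n : ℕ) (P : Finset (ℝ × ℝ)) (hP : P.card = n)
    (ctr : ℝ × ℝ) (r : ℝ) (hr : 0 < r)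
    (hcontain : (n : ℝ) / 5 ≤
      (((P : Set (ℝ × ℝ)) ∩ Metric.closedBall ctr (r / 2)).ncard : ℝ))
    (hmin : ∀ (c : ℝ × ℝ) (s : ℝ), 0 ≤ s → s < r →
      ((((P : Set (ℝ × ℝ)) ∩ Metric.closedBall c (s / 2)).ncard : ℝ)) < (n : ℝ) / 5) :
    ∀ t ∈ Set.Ioo (0 : ℝ) 1,
      (n : ℝ) / 5 ≤
        (((P : Set (ℝ × ℝ)) ∩ Metric.closedBall ctr ((1 + t) * r / 2)).ncard : ℝ) ∧
      (((P : Set (ℝ × ℝ)) ∩ Metric.closedBall ctr ((1 + t) * r / 2)).ncard : ℝ)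
        ≤ 4 * (n : ℝ) / 5 := by
  rintro t ⟨ht0, ht1⟩
  set R : ℝ := (1 + t) * r / 2 with hRdef
  have hRlt : R < r := by rw [hRdef]; nlinarith
  have hR0 : 0 ≤ R := by rw [hRdef]; nlinarith
  have hfin : ∀ s : Set (ℝ × ℝ), ((P : Set (ℝ × ℝ)) ∩ s).Finite :=
    fun s => P.finite_toSet.inter_of_left s
  constructor
  · refine le_trans hcontain ?_
    have hsub : ((P : Set (ℝ × ℝ)) ∩ Metric.closedBall ctr (r / 2)) ⊆
        ((P : Set (ℝ × ℝ)) ∩ Metric.closedBall ctr R) :=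
      Set.inter_subset_inter_right _
        (Metric.closedBall_subset_closedBall (by rw [hRdef]; nlinarith))
    exact_mod_cast Set.ncard_le_ncard hsub (hfin _)
  · set c1 : ℝ × ℝ := (ctr.1 - R / 2, ctr.2 - R / 2) with hc1
    set c2 : ℝ × ℝ := (ctr.1 - R / 2, ctr.2 + R / 2) with hc2
    set c3 : ℝ × ℝ := (ctr.1 + R / 2, ctr.2 - R / 2) with hc3
    set c4 : ℝ × ℝ := (ctr.1 + R / 2, ctr.2 + R / 2) with hc4
    have hcov : Metric.closedBall ctr R ⊆
        Metric.closedBall c1 (R / 2) ∪ Metric.closedBall c2 (R / 2) ∪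
        Metric.closedBall c3 (R / 2) ∪ Metric.closedBall c4 (R / 2) := by
      intro p hp
      rw [Metric.mem_closedBall, Prod.dist_eq, max_le_iff, Real.dist_eq, Real.dist_eq,
        abs_le, abs_le] at hp
      obtain ⟨⟨h1a, h1b⟩, ⟨h2a, h2b⟩⟩ := hp
      have key : ∀ c : ℝ × ℝ, |p.1 - c.1| ≤ R / 2 → |p.2 - c.2| ≤ R / 2 →
          p ∈ Metric.closedBall c (R / 2) := by
        intro c k1 k2
        rw [Metric.mem_closedBall, Prod.dist_eq, Real.dist_eq, Real.dist_eq]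
        exact max_le k1 k2
      rcases le_or_gt p.1 ctr.1 with hx | hx <;> rcases le_or_gt p.2 ctr.2 with hy | hy
      · exact Or.inl (Or.inl (Or.inl (key c1 (by rw [hc1]; rw [abs_le]; constructor <;> simp <;> linarith)
          (by rw [hc1]; rw [abs_le]; constructor <;> simp <;> linarith))))
      · exact Or.inl (Or.inl (Or.inr (key c2 (by rw [hc2]; rw [abs_le]; constructor <;> simp <;> linarith)
          (by rw [hc2]; rw [abs_le]; constructor <;> simp <;> linarith))))
      · exact Or.inl (Or.inr (key c3 (by rw [hc3]; rw [abs_le]; constructor <;> simp <;> linarith)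
          (by rw [hc3]; rw [abs_le]; constructor <;> simp <;> linarith)))
      · exact Or.inr (key c4 (by rw [hc4]; rw [abs_le]; constructor <;> simp <;> linarith)
          (by rw [hc4]; rw [abs_le]; constructor <;> simp <;> linarith))
    have hsub : ((P : Set (ℝ × ℝ)) ∩ Metric.closedBall ctr R) ⊆
        ((P : Set (ℝ × ℝ)) ∩ Metric.closedBall c1 (R / 2)) ∪
        ((P : Set (ℝ × ℝ)) ∩ Metric.closedBall c2 (R / 2)) ∪
        ((P : Set (ℝ × ℝ)) ∩ Metric.closedBall c3 (R / 2)) ∪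
        ((P : Set (ℝ × ℝ)) ∩ Metric.closedBall c4 (R / 2)) := by
      rintro p ⟨hpP, hpB⟩
      rcases hcov hpB with ((h | h) | h) | h
      · exact Or.inl (Or.inl (Or.inl ⟨hpP, h⟩))
      · exact Or.inl (Or.inl (Or.inr ⟨hpP, h⟩))
      · exact Or.inl (Or.inr ⟨hpP, h⟩)
      · exact Or.inr ⟨hpP, h⟩
    have hle : (((P : Set (ℝ × ℝ)) ∩ Metric.closedBall ctr R).ncard : ℝ) ≤
        (((P : Set (ℝ × ℝ)) ∩ Metric.closedBall c1 (R / 2)).ncard : ℝ) +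
        (((P : Set (ℝ × ℝ)) ∩ Metric.closedBall c2 (R / 2)).ncard : ℝ) +
        (((P : Set (ℝ × ℝ)) ∩ Metric.closedBall c3 (R / 2)).ncard : ℝ) +
        (((P : Set (ℝ × ℝ)) ∩ Metric.closedBall c4 (R / 2)).ncard : ℝ) := by
      have h1 := Set.ncard_le_ncard hsub
        ((((hfin _).union (hfin _)).union (hfin _)).union (hfin _))
      have h2 := Set.ncard_union_le
        ((((P : Set (ℝ × ℝ)) ∩ Metric.closedBall c1 (R / 2)) ∪
          ((P : Set (ℝ × ℝ)) ∩ Metric.closedBall c2 (R / 2))) ∪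
          ((P : Set (ℝ × ℝ)) ∩ Metric.closedBall c3 (R / 2)))
        ((P : Set (ℝ × ℝ)) ∩ Metric.closedBall c4 (R / 2))
      have h3 := Set.ncard_union_le
        (((P : Set (ℝ × ℝ)) ∩ Metric.closedBall c1 (R / 2)) ∪
          ((P : Set (ℝ × ℝ)) ∩ Metric.closedBall c2 (R / 2)))
        ((P : Set (ℝ × ℝ)) ∩ Metric.closedBall c3 (R / 2))
      have h4 := Set.ncard_union_le
        ((P : Set (ℝ × ℝ)) ∩ Metric.closedBall c1 (R / 2))
        ((P : Set (ℝ × ℝ)) ∩ Metric.closedBall c2 (R / 2))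
      have hnat : ((P : Set (ℝ × ℝ)) ∩ Metric.closedBall ctr R).ncard ≤
          ((P : Set (ℝ × ℝ)) ∩ Metric.closedBall c1 (R / 2)).ncard +
          ((P : Set (ℝ × ℝ)) ∩ Metric.closedBall c2 (R / 2)).ncard +
          ((P : Set (ℝ × ℝ)) ∩ Metric.closedBall c3 (R / 2)).ncard +
          ((P : Set (ℝ × ℝ)) ∩ Metric.closedBall c4 (R / 2)).ncard := by omega
      exact_mod_cast hnat
    have k1 := hmin c1 R hR0 hRlt
    have k2 := hmin c2 R hR0 hRlt
    have k3 := hmin c3 R hR0 hRlt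
    have k4 := hmin c4 R hR0 hRlt
    linarith
end

section
/- Let Φ be the potential Σ_{S ∈ P} |S|·log₂|S| over partitions P of subsets of a universe, starting from the trivial partition of an n-element set (Φ ≤ n log₂ n), and consider any interleaved sequence of operations: (a) splitting a block into two nonempty parts (paying the size of the smaller part), and (b) inserting a new block of size m (increasing Φ by at most m·log₂(n+M), where M is the total size inserted). Then the total payment over all splits is at most (n + M)·log₂(n + M). -/
open Finset Real

private lemma logb_mono19 {x y : ℝ} (hx : 1 ≤ x) (hxy : x ≤ y) :
    Real.logb 2 x ≤ Real.logb 2 y :=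
  (Real.logb_le_logb one_lt_two (by linarith) (by linarith)).mpr hxy

private lemma phi_nonneg19 (c : ℕ) : 0 ≤ (c : ℝ) * Real.logb 2 c := by
  rcases Nat.eq_zero_or_pos c with h | h
  · simp [h]
  · exact mul_nonneg (by positivity)
      (Real.logb_nonneg one_lt_two (by exact_mod_cast h))

private lemma split_key19 (a b : ℕ) (ha : 1 ≤ a) (hb : 1 ≤ b) (hba : b ≤ a) :
    (b : ℝ) + a * Real.logb 2 a + b * Real.logb 2 b ≤
      ((a : ℝ) + b) * Real.logb 2 ((a : ℝ) + b) := by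
  have haR : (1 : ℝ) ≤ a := by exact_mod_cast ha
  have hbR : (1 : ℝ) ≤ b := by exact_mod_cast hb
  have hbaR : (b : ℝ) ≤ a := by exact_mod_cast hba
  have h1 : (a : ℝ) * Real.logb 2 a ≤ a * Real.logb 2 ((a : ℝ) + b) :=
    mul_le_mul_of_nonneg_left (logb_mono19 haR (by linarith)) (by linarith)
  have h2 : (b : ℝ) * Real.logb 2 (2 * b) ≤ b * Real.logb 2 ((a : ℝ) + b) :=
    mul_le_mul_of_nonneg_left (logb_mono19 (by linarith) (by linarith)) (by linarith)
  have h3 : Real.logb 2 (2 * (b : ℝ)) = 1 + Real.logb 2 b := by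
    rw [Real.logb_mul (by norm_num) (by positivity),
      Real.logb_self_eq_one (by norm_num : (1:ℝ) < 2)]
  rw [h3] at h2
  nlinarith [h1, h2]

private lemma split_ineq19 (a b : ℕ) (ha : 1 ≤ a) (hb : 1 ≤ b) :
    ((min a b : ℕ) : ℝ) ≤ ((a : ℝ) + b) * Real.logb 2 ((a : ℝ) + b)
      - a * Real.logb 2 a - b * Real.logb 2 b := by
  rcases le_total b a with h | h
  · have := split_key19 a b ha hb h
    rw [min_eq_right h]; linarith
  · have := split_key19 b a hb ha h
    have hc : (b : ℝ) + a = (a : ℝ) + b := add_comm _ _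
    rw [hc] at this
    rw [min_eq_left h]; linarith

private noncomputable def Phi19 {α : Type*} [DecidableEq α] (Q : Finset (Finset α)) : ℝ :=
  ∑ S ∈ Q, (S.card : ℝ) * Real.logb 2 S.card

/-- Dynamic displacement bound: starting from the trivial partition of an
`n`-element set, under an interleaved sequence of splits (paying the size of
the smaller part) and insertions of new nonempty blocks (of total size `M`),
the total payment over all splits is at most `(n + M)·log₂(n + M)`. -/
theorem stmt_19 {α : Type*} [DecidableEq α] (n k : ℕ) (U : Finset α) (hU : U.card = n)
    (P : ℕ → Finset (Finset α)) (hP0 : P 0 = {U})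
    (hdisj : ∀ i, ∀ A ∈ P i, ∀ B ∈ P i, A ≠ B → Disjoint A B)
    (pay ins : ℕ → ℕ)
    (hstep : ∀ i < k,
      (∃ S S₁ S₂ : Finset α, S ∈ P i ∧ S₁.Nonempty ∧ S₂.Nonempty ∧
        Disjoint S₁ S₂ ∧ S₁ ∪ S₂ = S ∧
        P (i + 1) = insert S₁ (insert S₂ ((P i).erase S)) ∧
        pay i = min S₁.card S₂.card ∧ ins i = 0) ∨
      (∃ B : Finset α, B.Nonempty ∧ B ∉ P i ∧
        P (i + 1) = insert B (P i) ∧ pay i = 0 ∧ ins i = B.card)) :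
    (∑ i ∈ Finset.range k, (pay i : ℝ)) ≤
      ((n : ℝ) + ∑ i ∈ Finset.range k, (ins i : ℝ)) *
        Real.logb 2 ((n : ℝ) + ∑ i ∈ Finset.range k, (ins i : ℝ)) := by
  set M : ℝ := ∑ i ∈ Finset.range k, (ins i : ℝ) with hM
  have hMnonneg : 0 ≤ M := Finset.sum_nonneg fun i _ => by positivity
  set L : ℝ := Real.logb 2 ((n : ℝ) + M) with hL
  have hPhi0 : Phi19 (P 0) = (n : ℝ) * Real.logb 2 n := by
    rw [Phi19, hP0, Finset.sum_singleton, hU]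
  have hPhinn : ∀ Q : Finset (Finset α), 0 ≤ Phi19 Q := fun Q =>
    Finset.sum_nonneg fun S _ => phi_nonneg19 S.card
  have main : ∀ j ≤ k,
      (∑ i ∈ Finset.range j, (pay i : ℝ)) + Phi19 (P j) ≤
        Phi19 (P 0) + (∑ i ∈ Finset.range j, (ins i : ℝ)) * L := by
    intro j hj
    induction j with
    | zero => simp
    | succ j ih =>
      have hjk : j < k := hj
      have ih' := ih (le_of_lt hjk)
      rw [Finset.sum_range_succ, Finset.sum_range_succ]
      rcases hstep j hjk with ⟨S, S₁, S₂, hS, h1, h2, hdis, hun, hP, hpay, hins⟩ |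
        ⟨B, hBne, hBnm, hP, hpay, hins⟩
      · -- split step
        have hS1S : S₁ ⊆ S := hun ▸ Finset.subset_union_left
        have hS2S : S₂ ⊆ S := hun ▸ Finset.subset_union_right
        have hS12 : S₁ ≠ S₂ := by
          intro h
          obtain ⟨x, hx⟩ := h1
          exact (Finset.disjoint_left.mp hdis hx) (h ▸ hx)
        have hS1e : S₁ ∉ (P j).erase S := by
          intro h
          have hd := hdisj j S₁ (Finset.mem_of_mem_erase h) S hS (Finset.ne_of_mem_erase h)
          obtain ⟨x, hx⟩ := h1
          exact (Finset.disjoint_left.mp hd hx) (hS1S hx)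
        have hS2e : S₂ ∉ ((P j).erase S) := by
          intro h
          have hd := hdisj j S₂ (Finset.mem_of_mem_erase h) S hS (Finset.ne_of_mem_erase h)
          obtain ⟨x, hx⟩ := h2
          exact (Finset.disjoint_left.mp hd hx) (hS2S hx)
        have hScard : (S.card : ℝ) = (S₁.card : ℝ) + (S₂.card : ℝ) := by
          rw [← hun, Finset.card_union_of_disjoint hdis]; push_cast; ring
        have hPhiStep : Phi19 (P (j + 1)) =
            Phi19 (P j) - (S.card : ℝ) * Real.logb 2 S.card
              + (S₁.card : ℝ) * Real.logb 2 S₁.card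
              + (S₂.card : ℝ) * Real.logb 2 S₂.card := by
          rw [Phi19, hP, Finset.sum_insert (by simp [hS1e, hS12]),
            Finset.sum_insert hS2e, Finset.sum_erase_eq_sub hS, Phi19]
          ring
        have hkey := split_ineq19 S₁.card S₂.card
          (Finset.card_pos.mpr h1) (Finset.card_pos.mpr h2)
        have hSc : ((S₁.card : ℝ) + S₂.card) * Real.logb 2 ((S₁.card : ℝ) + S₂.card)
            = (S.card : ℝ) * Real.logb 2 S.card := by rw [hScard]
        rw [hSc] at hkey
        rw [hpay, hins, hPhiStep]
        push_cast
        push_cast at hkey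
        linarith [ih', hkey]
      · -- insertion step
        have hPhiStep : Phi19 (P (j + 1)) =
            Phi19 (P j) + (B.card : ℝ) * Real.logb 2 B.card := by
          rw [Phi19, hP, Finset.sum_insert hBnm, Phi19]; ring
        have hB1 : 1 ≤ B.card := Finset.card_pos.mpr hBne
        have hle : (B.card : ℝ) ≤ (n : ℝ) + M := by
          have h0 : (ins j : ℝ) ≤ M := by
            rw [hM]
            exact Finset.single_le_sum (f := fun i => ((ins i : ℕ) : ℝ))
              (fun i _ => by positivity) (Finset.mem_range.mpr hjk)
          rw [hins] at h0
          have h0n : (0 : ℝ) ≤ (n : ℝ) := by positivity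
          linarith
        have hins' : (B.card : ℝ) * Real.logb 2 B.card ≤ (ins j : ℝ) * L := by
          rw [hins, hL]
          exact mul_le_mul_of_nonneg_left
            (logb_mono19 (by exact_mod_cast hB1) hle) (by positivity)
        rw [hpay, hPhiStep]
        push_cast
        linarith [ih', hins']
  have hfinal := main k le_rfl
  have hPhi0le : Phi19 (P 0) ≤ (n : ℝ) * L := by
    rw [hPhi0, hL]
    rcases Nat.eq_zero_or_pos n with h | h
    · simp [h]
    · exact mul_le_mul_of_nonneg_left
        (logb_mono19 (by exact_mod_cast h) (by linarith)) (by positivity)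
  have hPk := hPhinn (P k)
  have : (∑ i ∈ Finset.range k, (pay i : ℝ)) ≤ (n : ℝ) * L + M * L := by linarith
  calc (∑ i ∈ Finset.range k, (pay i : ℝ)) ≤ (n : ℝ) * L + M * L := this
    _ = ((n : ℝ) + M) * L := by ring
end
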